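/- arXiv:2403.05809 — 5 statements merged into one kernel-verified Lean document; each statement's English description precedes it below -/
import Mathlib

section
/- Let K = {x ∈ ℝⁿ : wᵢ·x + bᵢ ≥ 0, 1 ≤ i ≤ m} be a bounded convex polytope with nonempty interior in ℝⁿ (so m ≥ n+1). Then there exist positive real numbers λ₁,...,λₘ > 0 such that Σᵢ λᵢ wᵢ = 0. -/
/-!
The product of the slacks `∏ i, (⟪w i, x⟫ + b i)` attains its maximum over the compact set
`K` at a point where it is positive, hence where every slack is positive, i.e. at an interior
point of `K`. Its gradient `∑ i, (∏ j ≠ i, (⟪w j, x⟫ + b j)) • w i` vanishes there, and these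
cofactors are the required positive weights.
-/

open scoped RealInnerProductSpace
open Set Filter Topology

section
variable {E : Type*} [NormedAddCommGroup E] [InnerProductSpace ℝ E]

theorem inner_add_pos_of_mem_interior {v : E} (hv : v ≠ 0) {c : ℝ} {x : E}
    (hx : x ∈ interior {y | 0 ≤ ⟪v, y⟫ + c}) : 0 < ⟪v, x⟫ + c := by
  have hset : {y | 0 ≤ ⟪v, y⟫ + c} = innerSL ℝ v ⁻¹' Ici (-c) := by
    ext; simp [neg_le_iff_add_nonneg]
  have hopen : IsOpenMap (innerSL ℝ v) :=
    (innerSL ℝ v).isOpenMap_of_ne_zero (by rwa [ne_eq, ← map_zero (innerSL ℝ), innerSL_inj])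
  rw [hset] at hx
  have hx' := hopen.interior_preimage_subset_preimage_interior hx
  rw [mem_preimage, interior_Ici, mem_Ioi, innerSL_apply_apply] at hx'
  linarith

variable {ι : Type*} [Fintype ι] (w : ι → E) (b : ι → ℝ)

theorem setOf_forall_inner_add_nonneg_mem_nhds {x : E} (hx : ∀ i, 0 < ⟪w i, x⟫ + b i) :
    {y | ∀ i, 0 ≤ ⟪w i, y⟫ + b i} ∈ 𝓝 x := by
  refine eventually_all.2 fun i => ?_
  have hcont : Continuous fun y => ⟪w i, y⟫ + b i := by fun_prop
  exact (continuousAt_const.eventually_lt hcont.continuousAt (hx i)).mono fun _ h => h.le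

theorem hasFDerivAt_prod_inner_add [DecidableEq ι] (x : E) :
    HasFDerivAt (fun y => ∏ i, (⟪w i, y⟫ + b i))
      (innerSL ℝ (∑ i, (∏ j ∈ Finset.univ.erase i, (⟪w j, x⟫ + b j)) • w i)) x := by
  have := HasFDerivAt.finsetProd (u := Finset.univ) (x := x)
    (fun i _ => ((innerSL ℝ (w i)).hasFDerivAt).add_const (b i))
  simpa [map_sum, map_smul] using this

theorem exists_pos_sum_smul_eq_zero_of_isCompact
    (hK : IsCompact {x | ∀ i, 0 ≤ ⟪w i, x⟫ + b i}) {y : E}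
    (hy : ∀ i, 0 < ⟪w i, y⟫ + b i) :
    ∃ lam : ι → ℝ, (∀ i, 0 < lam i) ∧ ∑ i, lam i • w i = 0 := by
  classical
  set g : E → ℝ := fun x => ∏ i, (⟪w i, x⟫ + b i)
  have hg : Continuous g := by fun_prop
  obtain ⟨x, hxK, hmax⟩ := hK.exists_isMaxOn ⟨y, fun i => (hy i).le⟩ hg.continuousOn
  have hgx : 0 < g x := (Finset.prod_pos fun i _ => hy i).trans_le (hmax fun i => (hy i).le)
  have hx : ∀ i, 0 < ⟪w i, x⟫ + b i := fun i =>
    (hxK i).lt_of_ne fun h => hgx.ne' (Finset.prod_eq_zero (Finset.mem_univ i) h.symm)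
  have hlocal := hmax.isLocalMax (setOf_forall_inner_add_nonneg_mem_nhds w b hx)
  have hcrit := hlocal.hasFDerivAt_eq_zero (hasFDerivAt_prod_inner_add w b x)
  refine ⟨fun i => ∏ j ∈ Finset.univ.erase i, (⟪w j, x⟫ + b j),
    fun i => Finset.prod_pos fun j _ => hx j, ?_⟩
  rwa [← map_zero (innerSL ℝ), innerSL_inj] at hcrit

end

/-- If K = {x : ⟪wᵢ,x⟫ + bᵢ ≥ 0} is a bounded (compact) convex polytope with
nonempty interior in ℝⁿ, then there exist λᵢ > 0 with Σ λᵢ wᵢ = 0. -/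
theorem exists_positive_combination_eq_zero
    (n m : ℕ) (w : Fin m → EuclideanSpace ℝ (Fin n)) (b : Fin m → ℝ)
    (hw : ∀ i, w i ≠ 0)
    (K : Set (EuclideanSpace ℝ (Fin n)))
    (hK : K = {x | ∀ i, ⟪w i, x⟫ + b i ≥ 0})
    (hKc : IsCompact K) (hKi : (interior K).Nonempty) :
    ∃ lam : Fin m → ℝ, (∀ i, 0 < lam i) ∧ ∑ i, lam i • w i = 0 := by
  subst hK
  obtain ⟨y, hy⟩ := hKi
  refine exists_pos_sum_smul_eq_zero_of_isCompact w b hKc (y := y) fun i => ?_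
  refine inner_add_pos_of_mem_interior (hw i) (interior_mono (fun _ hx => ?_) hy)
  exact hx i
end

section
/- Let τ = {x ∈ ℝⁿ : wᵢ·x + bᵢ ≥ 0, 1 ≤ i ≤ m} be a compact convex polytope with nonempty interior, ε > 0, and v(x) = a·x + c an affine function with R := sup over τ of |v|. Then there exist a matrix W₁ ∈ ℝ^{m×n}, vectors b₁ ∈ ℝᵐ, w₂ ∈ ℝ^{1×m}, and b₂ ∈ ℝ, such that the function φ(x) := σ(w₂ σ(W₁ x + b₁) + b₂) satisfies: (i) φ(x) = v(x) + R for all x ∈ τ with dist(x, ∂τ) ≥ ε; (ii) 0 ≤ φ(x) ≤ 2R for all x ∈ τ; (iii) φ(x) = 0 for all x ∉ τ. -/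
/-!
The network is `σ(v + R - P)` with the margin penalty
`P x = ∑ i, μ i * σ(ε‖w i‖ - (⟪w i, x⟫ + b i))`. Since `σ y = y + σ (-y)`, the hidden layer
`-∑ i, σ(μ i * (⟪w i, x⟫ + b i - ε‖w i‖))` is `P` minus an affine function, and that affine
function is `-v` up to a constant as soon as `∑ i, μ i • w i = -a`.

Boundedness of `τ` means that no direction `d ≠ 0` has `⟪w i, d⟫ ≥ 0` for all `i`, so the `w i`
positively span the space, and `μ` can be chosen with all `μ i` as large as we please. On the
`ε`-interior every constraint holds with margin `ε‖w i‖`, so `P = 0` there. Outside `τ` some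
constraint is violated by an amount growing linearly with the distance to an interior point, so
for large `μ` the penalty dominates `v + R`.
-/

open scoped RealInnerProductSpace

open Set Metric

theorem Metric.closedBall_subset_of_le_infDist_frontier {E : Type*} [NormedAddCommGroup E]
    [NormedSpace ℝ E] [FiniteDimensional ℝ E] {s : Set E} {x : E} {r : ℝ} (hs : IsClosed s)
    (hx : x ∈ s) (hr : r ≤ infDist x (frontier s)) : closedBall x r ⊆ s := by
  rcases eq_or_ne s univ with rfl | hne
  · exact subset_univ _
  obtain ⟨y, hy, hxy⟩ := exists_mem_frontier_infDist_compl_eq_dist hx hne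
  calc closedBall x r ⊆ closedBall x (infDist x sᶜ) :=
        closedBall_subset_closedBall (hr.trans (hxy ▸ infDist_le_dist_of_mem hy))
    _ ⊆ closure s := closedBall_infDist_compl_subset_closure hx
    _ = s := hs.closure_eq

section Polyhedron

variable {E : Type*} [NormedAddCommGroup E] [InnerProductSpace ℝ E]

theorem mul_norm_le_inner_add_of_closedBall_subset {x w : E} {β r : ℝ} (hr : 0 ≤ r)
    (h : closedBall x r ⊆ {y | 0 ≤ ⟪w, y⟫ + β}) : r * ‖w‖ ≤ ⟪w, x⟫ + β := by
  rcases eq_or_ne w 0 with rfl | hw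
  · simpa using h (mem_closedBall_self hr)
  have hw' : 0 < ‖w‖ := norm_pos_iff.mpr hw
  have hy : x - (r / ‖w‖) • w ∈ closedBall x r := by
    rw [mem_closedBall, dist_eq_norm, sub_sub_cancel_left, norm_neg, norm_smul,
      Real.norm_of_nonneg (by positivity), div_mul_cancel₀ _ hw'.ne']
  have : 0 ≤ ⟪w, x - (r / ‖w‖) • w⟫ + β := h hy
  have hrw : r / ‖w‖ * (‖w‖ * ‖w‖) = r * ‖w‖ := by field_simp
  rw [inner_sub_right, real_inner_smul_right, real_inner_self_eq_norm_mul_norm,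
    hrw] at this
  linarith

variable {ι : Type*}

def polyhedron (w : ι → E) (b : ι → ℝ) : Set E := {x | ∀ i, 0 ≤ ⟪w i, x⟫ + b i}

variable {w : ι → E} {b : ι → ℝ}

theorem mul_norm_le_of_le_infDist_frontier [FiniteDimensional ℝ E]
    (hP : IsClosed (polyhedron w b)) {x : E} (hx : x ∈ polyhedron w b) {r : ℝ} (hr : 0 ≤ r)
    (hrx : r ≤ infDist x (frontier (polyhedron w b))) (i : ι) :
    r * ‖w i‖ ≤ ⟪w i, x⟫ + b i :=
  mul_norm_le_inner_add_of_closedBall_subset hr fun _ hy =>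
    (closedBall_subset_of_le_infDist_frontier hP hx hrx hy) i

theorem eq_zero_of_forall_inner_nonneg_of_isBounded {x₀ : E}
    (hP : Bornology.IsBounded (polyhedron w b)) (hx₀ : x₀ ∈ polyhedron w b) {d : E}
    (hd : ∀ i, 0 ≤ ⟪w i, d⟫) : d = 0 := by
  obtain ⟨C, hC⟩ := hP.subset_closedBall x₀
  have hC0 : 0 ≤ C := dist_self x₀ ▸ hC hx₀
  by_contra hd0
  have hd' : 0 < ‖d‖ := norm_pos_iff.mpr hd0
  set t := (C + 1) / ‖d‖
  have hray : x₀ + t • d ∈ polyhedron w b := fun i => by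
    rw [inner_add_right, real_inner_smul_right]
    nlinarith [hx₀ i, hd i, show 0 ≤ t by positivity]
  have := hC hray
  rw [mem_closedBall, dist_eq_norm, add_sub_cancel_left, norm_smul,
    Real.norm_of_nonneg (by positivity), div_mul_cancel₀ _ hd'.ne'] at this
  linarith

theorem exists_inner_add_neg_of_notMem_polyhedron {x₀ x : E} {D : ℝ}
    (hx₀ : x₀ ∈ polyhedron w b) (hD : polyhedron w b ⊆ ball x₀ D) (hx : x ∉ polyhedron w b) :
    ∃ j, ⟪w j, x⟫ + b j < 0 ∧ (⟪w j, x₀⟫ + b j) * (‖x - x₀‖ - D) ≤ -D * (⟪w j, x⟫ + b j) := by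
  have hD0 : 0 < D := pos_of_mem_ball (hD hx₀)
  set t := ‖x - x₀‖
  rcases lt_or_ge t D with ht | ht
  · obtain ⟨j, hj⟩ := not_forall.mp hx
    refine ⟨j, not_le.mp hj, ?_⟩
    nlinarith [hx₀ j, not_le.mp hj]
  -- The point of the segment `[x₀, x]` at distance `D` from `x₀` violates some constraint `j`;
  -- as `⟪w j, ·⟫ + b j` is affine, it is violated at `x` by at least a multiple of `t - D`.
  have ht0 : 0 < t := hD0.trans_le ht
  have hy : x₀ + (D / t) • (x - x₀) ∉ polyhedron w b := fun hy => by
    have := hD hy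
    rw [mem_ball, dist_eq_norm, add_sub_cancel_left, norm_smul,
      Real.norm_of_nonneg (by positivity), div_mul_cancel₀ _ ht0.ne'] at this
    exact lt_irrefl D this
  obtain ⟨j, hj⟩ := not_forall.mp hy
  rw [not_le, inner_add_right, real_inner_smul_right, inner_sub_right] at hj
  have hjx : (⟪w j, x₀⟫ + b j) * (t - D) + D * (⟪w j, x⟫ + b j) < 0 := by
    have := mul_neg_of_pos_of_neg ht0 hj
    field_simp at this
    linarith
  refine ⟨j, ?_, by linarith⟩
  nlinarith [hx₀ j, mul_nonneg (hx₀ j) (sub_nonneg.mpr ht)]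

end Polyhedron

section PositiveSpan

variable {E : Type*} [NormedAddCommGroup E] [InnerProductSpace ℝ E] [FiniteDimensional ℝ E]
  {ι : Type*} [Fintype ι] {w : ι → E}

theorem surjective_linearCombination_of_forall_inner_nonneg
    (hw : ∀ d, (∀ i, 0 ≤ ⟪w i, d⟫) → d = 0) :
    Function.Surjective (Fintype.linearCombination ℝ w) := by
  rw [← LinearMap.range_eq_top, Fintype.range_linearCombination,
    ← Submodule.orthogonal_eq_bot_iff, Submodule.eq_bot_iff]
  intro d hd
  refine hw d fun i => le_of_eq ?_
  exact ((Submodule.mem_orthogonal _ d).mp hd (w i) (Submodule.subset_span ⟨i, rfl⟩)).symm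

theorem exists_pos_sum_smul_eq_zero_of_forall_inner_nonneg
    (hw : ∀ d, (∀ i, 0 ≤ ⟪w i, d⟫) → d = 0) :
    ∃ ν : ι → ℝ, (∀ i, 0 < ν i) ∧ ∑ i, ν i • w i = 0 := by
  classical
  -- `0` lies in the image `U` of the open positive orthant, or else a functional separating `0`
  -- from the open convex set `U` would be nonpositive on every `w i`.
  set L := Fintype.linearCombination ℝ w
  set U := L '' univ.pi fun _ => Ioi 0
  have hU : IsOpen U := LinearMap.isOpenMap_of_finiteDimensional L
    (surjective_linearCombination_of_forall_inner_nonneg hw) _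
    (isOpen_set_pi finite_univ fun _ _ => isOpen_Ioi)
  have hUconv : Convex ℝ U := (convex_pi fun _ _ => convex_Ioi 0).linear_image L
  by_contra! h
  have h0 : (0 : E) ∉ U := by
    rintro ⟨ν, hν, hν0⟩
    exact h ν (by simpa using hν) (by simpa [L, Fintype.linearCombination_apply] using hν0)
  obtain ⟨f, hf⟩ := geometric_hahn_banach_open_point hUconv hU h0
  rw [map_zero] at hf
  have hfw : ∀ i, f (w i) ≤ 0 := by
    intro i
    by_contra! hi
    set s := (|f (L 1)| + 1) / f (w i)
    have hs : 0 < s := by positivity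
    have hmem : L (1 + s • Pi.single i 1) ∈ U := by
      refine mem_image_of_mem L fun j _ => ?_
      rcases eq_or_ne j i with rfl | hj <;> simp [*, add_pos]
    have := hf _ hmem
    rw [map_add, map_smul, Fintype.linearCombination_apply_single, one_smul, map_add,
      map_smul, smul_eq_mul, div_mul_cancel₀ _ hi.ne'] at this
    linarith [neg_abs_le (f (L 1))]
  set d := (InnerProductSpace.toDual ℝ E).symm f
  have hd : -d = 0 := hw (-d) fun i => by
    rw [inner_neg_right, real_inner_comm, InnerProductSpace.toDual_symm_apply]
    linarith [hfw i]
  have h1 : ⟪d, L 1⟫ < 0 := by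
    rw [InnerProductSpace.toDual_symm_apply]
    exact hf (L 1) (mem_image_of_mem L fun _ _ => mem_Ioi.mpr one_pos)
  rw [neg_eq_zero.mp hd, inner_zero_left] at h1
  exact lt_irrefl 0 h1

theorem exists_ge_sum_smul_eq_of_forall_inner_nonneg
    (hw : ∀ d, (∀ i, 0 ≤ ⟪w i, d⟫) → d = 0) (z : E) (ρ : ℝ) :
    ∃ μ : ι → ℝ, (∀ i, ρ ≤ μ i) ∧ ∑ i, μ i • w i = z := by
  obtain ⟨r, hr⟩ := surjective_linearCombination_of_forall_inner_nonneg hw z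
  obtain ⟨ν, hν, hν0⟩ := exists_pos_sum_smul_eq_zero_of_forall_inner_nonneg hw
  obtain ⟨T, hT⟩ := Finite.exists_le fun i => (ρ - r i) / ν i
  refine ⟨fun i => r i + T * ν i, fun i => ?_, ?_⟩
  · linarith [(div_le_iff₀ (hν i)).mp (hT i)]
  · simp only [add_smul, mul_smul, Finset.sum_add_distrib, ← Finset.smul_sum, hν0, smul_zero,
      add_zero]
    simpa [Fintype.linearCombination_apply] using hr

end PositiveSpan

section Penalty

variable {E : Type*} [NormedAddCommGroup E] [InnerProductSpace ℝ E] {ι : Type*} [Fintype ι]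
  {w : ι → E} {b : ι → ℝ} {ε : ℝ} {μ : ι → ℝ}

def marginPenalty (w : ι → E) (b : ι → ℝ) (ε : ℝ) (μ : ι → ℝ) (x : E) : ℝ :=
  ∑ i, μ i * max (ε * ‖w i‖ - (⟪w i, x⟫ + b i)) 0

theorem marginPenalty_nonneg (hμ : ∀ i, 0 ≤ μ i) (x : E) : 0 ≤ marginPenalty w b ε μ x :=
  Finset.sum_nonneg fun i _ => mul_nonneg (hμ i) (le_max_right _ _)

theorem marginPenalty_eq_zero {x : E} (hx : ∀ i, ε * ‖w i‖ ≤ ⟪w i, x⟫ + b i) :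
    marginPenalty w b ε μ x = 0 :=
  Finset.sum_eq_zero fun i _ => by rw [max_eq_right (sub_nonpos.mpr (hx i)), mul_zero]

theorem exists_le_marginPenalty {x₀ : E} (hP : Bornology.IsBounded (polyhedron w b))
    (hx₀ : x₀ ∈ interior (polyhedron w b)) (hε : 0 < ε) (K : ℝ) {A : ℝ} (hA : 0 ≤ A) :
    ∃ ρ, 0 ≤ ρ ∧ ∀ μ : ι → ℝ, (∀ i, ρ ≤ μ i) →
      ∀ x ∉ polyhedron w b, K + A * ‖x - x₀‖ ≤ marginPenalty w b ε μ x := by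
  obtain ⟨r, hr, hball⟩ := nhds_basis_closedBall.mem_iff.mp (mem_interior_iff_mem_nhds.mp hx₀)
  obtain ⟨D, hD⟩ := hP.subset_ball x₀
  obtain ⟨M, hM⟩ := Finite.exists_le fun j =>
    max ((K + A * D) / (ε * ‖w j‖)) (A * D / (⟪w j, x₀⟫ + b j))
  refine ⟨max M 0, le_max_right _ _, fun μ hμ x hx => ?_⟩
  have hμ0 : ∀ i, 0 ≤ μ i := fun i => (le_max_right _ _).trans (hμ i)
  obtain ⟨j, hxj, hj⟩ :=
    exists_inner_add_neg_of_notMem_polyhedron (interior_subset hx₀) hD hx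
  have hwj : w j ≠ 0 := by
    rintro hw
    have := interior_subset hx₀ j
    simp only [hw, inner_zero_left, zero_add] at hxj this
    linarith
  have hG : 0 < ⟪w j, x₀⟫ + b j := (mul_pos hr (norm_pos_iff.mpr hwj)).trans_le
    (mul_norm_le_inner_add_of_closedBall_subset hr.le fun _ hy => hball hy j)
  have hθ : 0 < ε * ‖w j‖ := mul_pos hε (norm_pos_iff.mpr hwj)
  have hMj : M ≤ μ j := (le_max_left _ _).trans (hμ j)
  have h1 : K + A * D ≤ μ j * (ε * ‖w j‖) :=
    (div_le_iff₀ hθ).mp ((le_max_left _ _).trans ((hM j).trans hMj))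
  have h2 : A * D ≤ μ j * (⟪w j, x₀⟫ + b j) :=
    (div_le_iff₀ hG).mp ((le_max_right _ _).trans ((hM j).trans hMj))
  have h3 : A * (‖x - x₀‖ - D) ≤ μ j * -(⟪w j, x⟫ + b j) := by
    refine le_of_mul_le_mul_right ?_ hG
    nlinarith [mul_le_mul_of_nonneg_left hj hA,
      mul_le_mul_of_nonneg_right h2 (neg_nonneg.mpr hxj.le)]
  calc K + A * ‖x - x₀‖ ≤ μ j * max (ε * ‖w j‖ - (⟪w j, x⟫ + b j)) 0 := by
        nlinarith [mul_le_mul_of_nonneg_left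
          (le_max_left (ε * ‖w j‖ - (⟪w j, x⟫ + b j)) 0) (hμ0 j)]
    _ ≤ marginPenalty w b ε μ x :=
        Finset.single_le_sum (f := fun i => μ i * max (ε * ‖w i‖ - (⟪w i, x⟫ + b i)) 0)
          (fun i _ => mul_nonneg (hμ0 i) (le_max_right _ _)) (Finset.mem_univ j)

theorem sum_neg_relu_add_eq_sub_marginPenalty {a : E} (hμ : ∀ i, 0 ≤ μ i)
    (hμa : ∑ i, μ i • w i = -a) (C : ℝ) (x : E) :
    ∑ i, -max (⟪μ i • w i, x⟫ + μ i * (b i - ε * ‖w i‖)) 0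
        + (C + ∑ i, μ i * (b i - ε * ‖w i‖)) = ⟪a, x⟫ + C - marginPenalty w b ε μ x := by
  have hterm : ∀ i, -max (⟪μ i • w i, x⟫ + μ i * (b i - ε * ‖w i‖)) 0
      = -⟪μ i • w i, x⟫ - μ i * (b i - ε * ‖w i‖)
        - μ i * max (ε * ‖w i‖ - (⟪w i, x⟫ + b i)) 0 := fun i => by
    rw [mul_max_of_nonneg _ _ (hμ i), mul_zero, real_inner_smul_left]
    rcases le_total (μ i * ⟪w i, x⟫ + μ i * (b i - ε * ‖w i‖)) 0 with h | h
    · rw [max_eq_right h, max_eq_left (by linarith)]; ring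
    · rw [max_eq_left h, max_eq_right (by linarith)]; ring
  rw [Finset.sum_congr rfl fun i _ => hterm i, Finset.sum_sub_distrib, Finset.sum_sub_distrib,
    Finset.sum_neg_distrib, ← sum_inner, hμa, inner_neg_left, neg_neg, marginPenalty]
  ring

end Penalty

theorem bump_construction_general
    (n m : ℕ) (w : Fin m → EuclideanSpace ℝ (Fin n)) (b : Fin m → ℝ)
    (τ : Set (EuclideanSpace ℝ (Fin n)))
    (hτ : τ = {x | ∀ i, ⟪w i, x⟫ + b i ≥ 0})
    (hτc : IsCompact τ) (hτi : (interior τ).Nonempty)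
    (ε : ℝ) (hε : 0 < ε)
    (a : EuclideanSpace ℝ (Fin n)) (c : ℝ)
    (R : ℝ) (hR : R = sSup ((fun x => |⟪a, x⟫ + c|) '' τ)) :
    ∃ (W₁ : Fin m → EuclideanSpace ℝ (Fin n)) (b₁ : Fin m → ℝ)
      (w₂ : Fin m → ℝ) (b₂ : ℝ),
      (∀ x ∈ τ, ε ≤ Metric.infDist x (frontier τ) →
        max (∑ i, w₂ i * max (⟪W₁ i, x⟫ + b₁ i) 0 + b₂) 0 = ⟪a, x⟫ + c + R) ∧
      (∀ x ∈ τ,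
        0 ≤ max (∑ i, w₂ i * max (⟪W₁ i, x⟫ + b₁ i) 0 + b₂) 0 ∧
        max (∑ i, w₂ i * max (⟪W₁ i, x⟫ + b₁ i) 0 + b₂) 0 ≤ 2 * R) ∧
      (∀ x ∉ τ, max (∑ i, w₂ i * max (⟪W₁ i, x⟫ + b₁ i) 0 + b₂) 0 = 0) := by
  obtain rfl : τ = polyhedron w b := hτ
  obtain ⟨x₀, hx₀⟩ := hτi
  have hvR : ∀ x ∈ polyhedron w b, |⟪a, x⟫ + c| ≤ R := fun x hx =>
    hR ▸ le_csSup (hτc.image (by fun_prop)).bddAbove ⟨x, hx, rfl⟩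
  obtain ⟨ρ, hρ, hpen⟩ := exists_le_marginPenalty hτc.isBounded hx₀ hε (2 * R) (norm_nonneg a)
  obtain ⟨μ, hμρ, hμa⟩ := exists_ge_sum_smul_eq_of_forall_inner_nonneg
    (fun _ => eq_zero_of_forall_inner_nonneg_of_isBounded hτc.isBounded (interior_subset hx₀))
    (-a) ρ
  have hμ : ∀ i, 0 ≤ μ i := fun i => hρ.trans (hμρ i)
  have hP : ∀ x, 0 ≤ marginPenalty w b ε μ x := marginPenalty_nonneg hμ
  refine ⟨fun i => μ i • w i, fun i => μ i * (b i - ε * ‖w i‖), fun _ => -1,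
    c + R + ∑ i, μ i * (b i - ε * ‖w i‖), ?_, ?_, ?_⟩ <;>
    simp only [neg_one_mul, sum_neg_relu_add_eq_sub_marginPenalty hμ hμa]
  · intro x hx hxε
    rw [marginPenalty_eq_zero (mul_norm_le_of_le_infDist_frontier hτc.isClosed hx hε.le hxε),
      sub_zero, max_eq_left] <;>
    linarith [neg_abs_le (⟪a, x⟫ + c), hvR x hx]
  · intro x hx
    refine ⟨le_max_right _ _, max_le ?_ ?_⟩
    · linarith [le_abs_self (⟪a, x⟫ + c), hvR x hx, hP x]
    · linarith [abs_nonneg (⟪a, x⟫ + c), hvR x hx]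
  · intro x hx
    have hax : ⟪a, x⟫ + c ≤ R + ‖a‖ * ‖x - x₀‖ := by
      have := real_inner_le_norm a (x - x₀)
      rw [inner_sub_right] at this
      linarith [le_abs_self (⟪a, x₀⟫ + c), hvR x₀ (interior_subset hx₀)]
    exact max_eq_right (by linarith [hpen μ hμρ x hx])

/-- The single-polytope bump construction.  Let τ = {x : ⟪wᵢ,x⟫ + bᵢ ≥ 0} be a
compact convex polytope with nonempty interior, ε > 0, v(x) = ⟪a,x⟫ + c affine, and
R = sup_{x∈τ} |v(x)|.  Then there is a two-hidden-layer ReLU network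
φ(x) = σ(Σᵢ w₂ᵢ σ(⟪W₁ᵢ,x⟫ + b₁ᵢ) + b₂) with φ = v + R on the ε-interior of τ,
0 ≤ φ ≤ 2R on τ, and φ = 0 outside τ. -/
theorem bump_construction
    (n m : ℕ) (w : Fin m → EuclideanSpace ℝ (Fin n)) (b : Fin m → ℝ)
    (hw : ∀ i, w i ≠ 0)
    (τ : Set (EuclideanSpace ℝ (Fin n)))
    (hτ : τ = {x | ∀ i, ⟪w i, x⟫ + b i ≥ 0})
    (hτc : IsCompact τ) (hτi : (interior τ).Nonempty)
    (ε : ℝ) (hε : 0 < ε)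
    (a : EuclideanSpace ℝ (Fin n)) (c : ℝ)
    (R : ℝ) (hR : R = sSup ((fun x => |⟪a, x⟫ + c|) '' τ)) :
    ∃ (W₁ : Fin m → EuclideanSpace ℝ (Fin n)) (b₁ : Fin m → ℝ)
      (w₂ : Fin m → ℝ) (b₂ : ℝ),
      (∀ x ∈ τ, ε ≤ Metric.infDist x (frontier τ) →
        max (∑ i, w₂ i * max (⟪W₁ i, x⟫ + b₁ i) 0 + b₂) 0 = ⟪a, x⟫ + c + R) ∧
      (∀ x ∈ τ,
        0 ≤ max (∑ i, w₂ i * max (⟪W₁ i, x⟫ + b₁ i) 0 + b₂) 0 ∧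
        max (∑ i, w₂ i * max (⟪W₁ i, x⟫ + b₁ i) 0 + b₂) 0 ≤ 2 * R) ∧
      (∀ x ∉ τ, max (∑ i, w₂ i * max (⟪W₁ i, x⟫ + b₁ i) 0 + b₂) 0 = 0) :=
  bump_construction_general n m w b τ hτ hτc hτi ε hε a c R hR
end

section
/- Every nonzero function of the form f(x) = Σⱼ aⱼ σ(wⱼ·x + bⱼ) (a one-hidden-layer ReLU network on ℝⁿ, n ≥ 2) that is not identically zero is not in Lᵖ(ℝⁿ) for any 1 ≤ p < ∞; in particular, no nonzero one-hidden-layer ReLU network has compact support. -/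
/-!
Along a ray `y + t • v`, a neuron `σ(c + t d)` is eventually the affine function
`t σ(d) + (σ(c) - σ(-sign(d) c))`. So if the network `f` tends to `0` at infinity, the constant
terms of these asymptotes add up to `0`, that is `f(y) = Σⱼ aⱼ σ(-sign⟪wⱼ, v⟫ (⟪wⱼ, y⟫ + bⱼ))`:
`f` is again a network, without the neurons with `⟪wⱼ, v⟫ = 0`. As `n ≥ 2`, `v` can be taken
orthogonal to any given `wⱼ`, and induction on the set of neurons gives `f = 0`.

On the other hand `f` is Lipschitz, and a uniformly continuous `Lᵖ` function tends to `0` at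
infinity: otherwise the set `{‖f‖ ≥ ε / 2}`, of finite measure, would contain balls of a fixed
radius arbitrarily far out.
-/

open scoped RealInnerProductSpace ENNReal
open MeasureTheory Filter Bornology Topology Metric

theorem eventually_max_add_mul_zero_eq (c d : ℝ) :
    ∀ᶠ t in atTop, max (c + t * d) 0 = t * max d 0 + (max c 0 - max (-Real.sign d * c) 0) := by
  rcases lt_trichotomy d 0 with hd | rfl | hd
  · filter_upwards [eventually_ge_atTop (c / -d)] with t ht
    have : c + t * d ≤ 0 := by
      rw [div_le_iff₀ (neg_pos.2 hd)] at ht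
      linarith
    rw [max_eq_right this, max_eq_right hd.le, Real.sign_of_neg hd]
    ring_nf
  · simp
  · filter_upwards [eventually_ge_atTop (-c / d)] with t ht
    have : 0 ≤ c + t * d := by
      rw [div_le_iff₀ hd] at ht
      linarith
    rw [max_eq_left this, max_eq_left hd.le, Real.sign_of_pos hd, neg_one_mul,
      max_zero_sub_max_neg_zero_eq_self]
    ring

theorem eq_zero_of_tendsto_mul_add {α β : ℝ} (h : Tendsto (fun t => t * α + β) atTop (𝓝 0)) :
    α = 0 ∧ β = 0 := by
  have hα : Tendsto (fun _ : ℝ => α) atTop (𝓝 (0 - 0)) := by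
    refine ((h.comp (tendsto_atTop_add_const_right _ 1 tendsto_id)).sub h).congr fun t => ?_
    simp only [Function.comp_apply, id]
    ring
  obtain rfl : α = 0 := by simpa using tendsto_const_nhds_iff.1 hα
  simp only [mul_zero, zero_add] at h
  exact ⟨rfl, tendsto_const_nhds_iff.1 h⟩

theorem tendsto_add_smul_atTop_cobounded {E : Type*} [NormedAddCommGroup E] [NormedSpace ℝ E]
    (y : E) {v : E} (hv : v ≠ 0) : Tendsto (fun t : ℝ => y + t • v) atTop (cobounded E) := by
  refine (tendsto_const_add_cobounded y).comp (tendsto_norm_atTop_iff_cobounded.1 ?_)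
  simp only [norm_smul]
  exact (tendsto_norm_atTop_atTop.comp tendsto_id).atTop_mul_const (norm_pos_iff.2 hv)

theorem exists_ne_zero_inner_eq_zero {E : Type*} [NormedAddCommGroup E] [InnerProductSpace ℝ E]
    (hE : 2 ≤ Module.finrank ℝ E) (u : E) : ∃ v ≠ 0, ⟪u, v⟫ = 0 := by
  have : FiniteDimensional ℝ E := Module.finite_of_finrank_pos (by omega)
  have hker := LinearMap.ker_ne_bot_of_finrank_lt (f := innerₛₗ ℝ u) (by simp; omega)
  obtain ⟨v, hv, hv0⟩ := (Submodule.ne_bot_iff _).1 hker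
  exact ⟨v, hv0, hv⟩

theorem MemLp.tendsto_zero_cocompact_of_uniformContinuous {E F : Type*} [NormedAddCommGroup E]
    [NormedSpace ℝ E] [FiniteDimensional ℝ E] [MeasurableSpace E] [BorelSpace E] {μ : Measure E}
    [μ.IsAddHaarMeasure] [NormedAddCommGroup F] {f : E → F} {p : ℝ≥0∞} (hp0 : p ≠ 0) (hp : p ≠ ∞)
    (hf : MemLp f p μ) (huc : UniformContinuous f) : Tendsto f (cocompact E) (𝓝 0) := by
  refine Metric.tendsto_nhds.2 fun ε hε => ?_
  by_contra hfreq
  rw [not_eventually] at hfreq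
  obtain ⟨δ, hδ, hfδ⟩ := Metric.uniformContinuous_iff.1 huc (ε / 2) (half_pos hε)
  set S := {x | (ε / 2).toNNReal ≤ ‖f x‖₊}
  have : IsFiniteMeasure (μ.restrict S) :=
    isFiniteMeasure_restrict.2 (hf.meas_ge_lt_top hp0 hp (by simpa using hε)).ne
  have htail := tendsto_measure_compl_closedBall_of_isTightMeasureSet
    (isTightMeasureSet_singleton (μ := μ.restrict S)) 0
  simp only [Set.mem_singleton_iff, iSup_iSup_eq_left] at htail
  have hlow : ∀ r : ℝ, μ (ball 0 δ) ≤ μ.restrict S (closedBall 0 r)ᶜ := by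
    intro r
    obtain ⟨x, hfx, hx⟩ :=
      (hfreq.and_eventually (isCompact_closedBall 0 (r + δ)).compl_mem_cocompact).exists
    have hball : ball x δ ⊆ S ∩ (closedBall 0 r)ᶜ := by
      intro y hy
      have hxy := hfδ (mem_ball'.1 hy)
      simp only [dist_zero_right, not_lt] at hfx
      simp only [mem_closedBall, dist_zero_right, not_le] at hx
      refine ⟨?_, ?_⟩
      · simp only [S, Set.mem_ofPred_eq, Real.toNNReal_le_iff_le_coe, coe_nnnorm]
        linarith [norm_sub_norm_le (f x) (f y), dist_eq_norm (f x) (f y)]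
      · simp only [Set.mem_compl_iff, mem_closedBall, dist_zero_right, not_le]
        linarith [norm_sub_norm_le x y, dist_eq_norm x y, mem_ball'.1 hy]
    calc μ (ball 0 δ) = μ (ball x δ) := (Measure.addHaar_ball_center μ x δ).symm
      _ = μ.restrict S (ball x δ) :=
        (Measure.restrict_eq_self _ (hball.trans Set.inter_subset_left)).symm
      _ ≤ _ := measure_mono (hball.trans Set.inter_subset_right)
  exact (measure_ball_pos μ 0 hδ).ne' (nonpos_iff_eq_zero.1 (ge_of_tendsto' htail hlow))

section ReLU

variable {ι E : Type*} [NormedAddCommGroup E] [InnerProductSpace ℝ E]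

def reluNet (s : Finset ι) (a : ι → ℝ) (w : ι → E) (b : ι → ℝ) (x : E) : ℝ :=
  ∑ j ∈ s, a j * max (⟪w j, x⟫ + b j) 0

variable {s : Finset ι} {a : ι → ℝ} {w : ι → E} {b : ι → ℝ}

theorem uniformContinuous_reluNet : UniformContinuous (reluNet s a w b) :=
  Finset.uniformContinuous_sum s fun j _ => ((LipschitzWith.id.max_const 0).uniformContinuous.comp
    ((innerSL ℝ (w j)).uniformContinuous.add uniformContinuous_const)).const_mul' (a j)

theorem reluNet_eq_filter_of_tendsto_cobounded {v : E} (hv : v ≠ 0)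
    (h : Tendsto (reluNet s a w b) (cobounded E) (𝓝 0)) :
    reluNet s a w b = reluNet {j ∈ s | ⟪w j, v⟫ ≠ 0} a
      (fun j => -Real.sign ⟪w j, v⟫ • w j) (fun j => -Real.sign ⟪w j, v⟫ * b j) := by
  funext y
  have hray : ∀ᶠ t in atTop, reluNet s a w b (y + t • v) =
      t * ∑ j ∈ s, a j * max ⟪w j, v⟫ 0 +
        (reluNet s a w b y - ∑ j ∈ s, a j * max (-Real.sign ⟪w j, v⟫ * (⟪w j, y⟫ + b j)) 0) := by
    filter_upwards [(s.eventually_all).2 fun j _ =>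
      eventually_max_add_mul_zero_eq (⟪w j, y⟫ + b j) ⟪w j, v⟫] with t ht
    simp only [reluNet, Finset.mul_sum, ← Finset.sum_sub_distrib, ← Finset.sum_add_distrib]
    refine Finset.sum_congr rfl fun j hj => ?_
    rw [inner_add_right, real_inner_smul_right, add_right_comm, ht j hj]
    ring
  have hβ := (eq_zero_of_tendsto_mul_add
    ((h.comp (tendsto_add_smul_atTop_cobounded y hv)).congr' hray)).2
  rw [sub_eq_zero.1 hβ, reluNet, Finset.sum_filter_of_ne]
  · refine Finset.sum_congr rfl fun j _ => ?_
    rw [real_inner_smul_left, mul_add]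
  · intro j _ hj hjv
    simp [hjv] at hj

theorem reluNet_eq_zero_of_tendsto_cobounded (hE : 2 ≤ Module.finrank ℝ E)
    (h : Tendsto (reluNet s a w b) (cobounded E) (𝓝 0)) : reluNet s a w b = 0 := by
  induction s using Finset.strongInduction generalizing w b with
  | H s ih =>
    rcases s.eq_empty_or_nonempty with rfl | ⟨j, hj⟩
    · funext x
      simp [reluNet]
    obtain ⟨v, hv, hjv⟩ := exists_ne_zero_inner_eq_zero hE (w j)
    have hfilter := reluNet_eq_filter_of_tendsto_cobounded hv h
    rw [hfilter] at h ⊢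
    exact ih _ (Finset.filter_ssubset.2 ⟨j, hj, by simp [hjv]⟩) h

end ReLU

/-- For n ≥ 2, a one-hidden-layer ReLU network
f(x) = Σⱼ aⱼ σ(⟪wⱼ,x⟫ + bⱼ) that is not identically zero is not in Lᵖ(ℝⁿ) for any
1 ≤ p < ∞; in particular it does not have compact support. -/
theorem one_hidden_layer_not_Lp
    (n m : ℕ) (hn : 2 ≤ n)
    (a : Fin m → ℝ) (w : Fin m → EuclideanSpace ℝ (Fin n)) (b : Fin m → ℝ)
    (f : EuclideanSpace ℝ (Fin n) → ℝ)
    (hf : f = fun x => ∑ j, a j * max (⟪w j, x⟫ + b j) 0)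
    (hne : f ≠ 0) :
    (∀ p : ℝ, 1 ≤ p → ¬ MemLp f (ENNReal.ofReal p) (volume : Measure (EuclideanSpace ℝ (Fin n))))
    ∧ ¬ HasCompactSupport f := by
  subst hf
  have hdecay : ¬ Tendsto (reluNet Finset.univ a w b) (cocompact _) (𝓝 0) := fun h =>
    hne (reluNet_eq_zero_of_tendsto_cobounded (by rwa [finrank_euclideanSpace_fin])
      (h.mono_left cobounded_le_cocompact))
  refine ⟨fun p hp hLp => hdecay ?_, fun hc => hdecay hc.is_zero_at_infty⟩
  exact MemLp.tendsto_zero_cocompact_of_uniformContinuous (ENNReal.ofReal_pos.2 (by linarith)).ne'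
    ENNReal.ofReal_ne_top hLp uniformContinuous_reluNet
end

section
/- For any function v ∈ Lᵖ(ℝⁿ) with 1 ≤ p < ∞ and any δ > 0, there exists a two-hidden-layer ReLU neural network f (of the form f(x) = w₃ σ(W₂ σ(W₁x + b₁) + b₂) with finitely many neurons) that is compactly supported and satisfies ‖f - v‖_{Lᵖ(ℝⁿ)} < δ. -/
open MeasureTheory Set Filter Topology
open scoped ENNReal NNReal

/-!
Approximate `v` in `Lᵖ` by a continuous compactly supported `g`, and `g` by its samples
`g (ℓ ⌊x / ℓ⌋)` on the grid of mesh `ℓ`: by uniform continuity this is a good approximation, and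
it is a finite combination of indicators of half-open cubes. A trapezoid in one coordinate is a
combination of four ReLUs, and a second-layer neuron `σ (∑ᵢ trapezoidᵢ (xᵢ) - (n - 1))` acts
as their conjunction: it takes values in `[0, 1]`, equals `1` on the cube shrunk by `η` and
vanishes off the closed cube. It thus differs from the indicator of the cube only on a shell
whose volume tends to `0` with `η`, and the sampled values of `g` serve as output weights.
-/

section Networks

variable (E : Type*) [Inner ℝ E]

def twoHiddenLayerReLUNets : Submodule ℝ (E → ℝ) where
  carrier := {f | ∃ (h₁ h₂ : ℕ) (W₁ : Fin h₁ → E) (b₁ : Fin h₁ → ℝ)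
    (W₂ : Fin h₂ → Fin h₁ → ℝ) (b₂ : Fin h₂ → ℝ) (w₃ : Fin h₂ → ℝ),
    f = fun x => ∑ k, w₃ k * max (∑ j, W₂ k j * max (inner ℝ (W₁ j) x + b₁ j) 0 + b₂ k) 0}
  zero_mem' := ⟨0, 0, Fin.elim0, Fin.elim0, Fin.elim0, Fin.elim0, Fin.elim0, by ext; simp⟩
  add_mem' := by
    rintro _ _ ⟨a₁, a₂, W₁, b₁, W₂, b₂, w₃, rfl⟩ ⟨c₁, c₂, V₁, d₁, V₂, d₂, v₃, rfl⟩
    refine ⟨a₁ + c₁, a₂ + c₂, Fin.addCases W₁ V₁, Fin.addCases b₁ d₁,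
      Fin.addCases (fun k => Fin.addCases (W₂ k) 0) (fun k => Fin.addCases 0 (V₂ k)),
      Fin.addCases b₂ d₂, Fin.addCases w₃ v₃, ?_⟩
    ext x
    simp [Fin.sum_univ_add]
  smul_mem' := by
    rintro c _ ⟨h₁, h₂, W₁, b₁, W₂, b₂, w₃, rfl⟩
    refine ⟨h₁, h₂, W₁, b₁, W₂, b₂, c • w₃, ?_⟩
    ext x
    simp [Finset.mul_sum, mul_assoc]

variable {E}

theorem relu_neuron_mem_twoHiddenLayerReLUNets {κ : Type*} [Fintype κ] (w : κ → E)
    (β c : κ → ℝ) (b : ℝ) :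
    (fun x => max (∑ j, c j * max (inner ℝ (w j) x + β j) 0 + b) 0) ∈
      twoHiddenLayerReLUNets E := by
  let e := Fintype.equivFin κ
  refine ⟨Fintype.card κ, 1, w ∘ e.symm, β ∘ e.symm, fun _ => c ∘ e.symm, fun _ => b,
    fun _ => 1, ?_⟩
  ext x
  simp [← e.symm.sum_comp]

end Networks

theorem continuous_of_mem_twoHiddenLayerReLUNets {E : Type*} [NormedAddCommGroup E]
    [InnerProductSpace ℝ E] {f : E → ℝ} (hf : f ∈ twoHiddenLayerReLUNets E) : Continuous f := by
  obtain ⟨h₁, h₂, W₁, b₁, W₂, b₂, w₃, rfl⟩ := hf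
  fun_prop

section Boxes

variable {ι : Type*}

def closedBox (a b : ι → ℝ) : Set (EuclideanSpace ℝ ι) :=
  WithLp.ofLp ⁻¹' univ.pi fun i => Icc (a i) (b i)

def halfOpenBox (a b : ι → ℝ) : Set (EuclideanSpace ℝ ι) :=
  WithLp.ofLp ⁻¹' univ.pi fun i => Ico (a i) (b i)

variable [Fintype ι] {a b : ι → ℝ} {η : ℝ}

theorem measurableSet_closedBox (a b : ι → ℝ) : MeasurableSet (closedBox a b) :=
  WithLp.measurable_ofLp 2 _ (MeasurableSet.univ_pi fun _ => measurableSet_Icc)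

theorem measurableSet_halfOpenBox (a b : ι → ℝ) : MeasurableSet (halfOpenBox a b) :=
  WithLp.measurable_ofLp 2 _ (MeasurableSet.univ_pi fun _ => measurableSet_Ico)

theorem volume_closedBox (a b : ι → ℝ) :
    volume (closedBox a b) = ∏ i, ENNReal.ofReal (b i - a i) := by
  rw [closedBox, (PiLp.volume_preserving_ofLp ι).measure_preimage
    (MeasurableSet.univ_pi fun _ => measurableSet_Icc).nullMeasurableSet, volume_pi_pi]
  simp only [Real.volume_Icc]

theorem volume_closedBox_sdiff (hη : 0 ≤ η) (hab : ∀ i, 2 * η ≤ b i - a i) :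
    volume (closedBox a b \ closedBox (fun i => a i + η) (fun i => b i - η)) =
      ENNReal.ofReal (∏ i, (b i - a i) - ∏ i, (b i - a i - 2 * η)) := by
  have hsub : closedBox (fun i => a i + η) (fun i => b i - η) ⊆ closedBox a b :=
    preimage_mono <| pi_mono fun i _ => Icc_subset_Icc (by linarith) (by linarith)
  have hwidth : ∀ i, b i - η - (a i + η) = b i - a i - 2 * η := fun i => by ring
  rw [measure_sdiff hsub (measurableSet_closedBox _ _).nullMeasurableSet
      (by rw [volume_closedBox]; exact ENNReal.prod_ne_top fun _ _ => ENNReal.ofReal_ne_top),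
    volume_closedBox, volume_closedBox, ← ENNReal.ofReal_prod_of_nonneg,
    ← ENNReal.ofReal_prod_of_nonneg, ← ENNReal.ofReal_sub,
    Finset.prod_congr rfl fun i _ => hwidth i]
  · exact Finset.prod_nonneg fun i _ => by linarith [hab i]
  · exact fun i _ => by linarith [hab i]
  · exact fun i _ => by linarith [hab i]

end Boxes

noncomputable section Bump

def trapezoid (a b η t : ℝ) : ℝ :=
  (max (t - a) 0 - max (t - (a + η)) 0 - max (t - (b - η)) 0 + max (t - b) 0) / η

variable {a b η t : ℝ}

theorem trapezoid_le_one (hη : 0 < η) : trapezoid a b η t ≤ 1 := by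
  rw [trapezoid, div_le_one hη]
  simp only [max_def]
  split_ifs <;> linarith

theorem trapezoid_eq_one (hη : 0 < η) (ht : t ∈ Icc (a + η) (b - η)) :
    trapezoid a b η t = 1 := by
  obtain ⟨h₁, h₂⟩ := ht
  rw [trapezoid, div_eq_one_iff_eq hη.ne', max_eq_left (by linarith), max_eq_left (by linarith),
    max_eq_right (by linarith), max_eq_right (by linarith)]
  ring

theorem trapezoid_eq_zero (hη : 0 < η) (hab : 2 * η ≤ b - a) (ht : t ∉ Icc a b) :
    trapezoid a b η t = 0 := by
  rw [mem_Icc, not_and_or, not_le, not_le] at ht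
  rw [trapezoid, div_eq_zero_iff, or_iff_left hη.ne']
  rcases ht with ht | ht
  · rw [max_eq_right (by linarith), max_eq_right (by linarith), max_eq_right (by linarith),
      max_eq_right (by linarith)]
    ring
  · rw [max_eq_left (by linarith), max_eq_left (by linarith), max_eq_left (by linarith),
      max_eq_left (by linarith)]
    ring

variable {ι : Type*} [Fintype ι]

def boxBump (a b : ι → ℝ) (η : ℝ) (x : EuclideanSpace ℝ ι) : ℝ :=
  max (∑ i, trapezoid (a i) (b i) η (x i) - (Fintype.card ι - 1)) 0

theorem continuous_boxBump (a b : ι → ℝ) (η : ℝ) : Continuous (boxBump a b η) := by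
  unfold boxBump trapezoid
  fun_prop

variable {a b : ι → ℝ} {x : EuclideanSpace ℝ ι}

theorem boxBump_nonneg : 0 ≤ boxBump a b η x := le_max_right _ _

theorem boxBump_le_one (hη : 0 < η) : boxBump a b η x ≤ 1 := by
  refine max_le ?_ zero_le_one
  have : ∑ i, trapezoid (a i) (b i) η (x i) ≤ ∑ _i : ι, 1 :=
    Finset.sum_le_sum fun i _ => trapezoid_le_one hη
  simp only [Finset.sum_const, Finset.card_univ, nsmul_one] at this
  linarith

theorem boxBump_eq_one (hη : 0 < η) (hx : x ∈ closedBox (fun i => a i + η) (fun i => b i - η)) :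
    boxBump a b η x = 1 := by
  simp only [boxBump, trapezoid_eq_one hη (hx _ (mem_univ _)), Finset.sum_const, Finset.card_univ,
    nsmul_one]
  norm_num

theorem boxBump_eq_zero (hη : 0 < η) (hab : ∀ i, 2 * η ≤ b i - a i) (hx : x ∉ closedBox a b) :
    boxBump a b η x = 0 := by
  obtain ⟨i, hi⟩ : ∃ i, x i ∉ Icc (a i) (b i) := by
    by_contra! h
    exact hx fun i _ => h i
  have hdefect : 1 ≤ ∑ j, (1 - trapezoid (a j) (b j) η (x j)) := by
    simpa [trapezoid_eq_zero hη (hab i) hi] using Finset.single_le_sum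
      (f := fun j => 1 - trapezoid (a j) (b j) η (x j))
      (fun j _ => sub_nonneg.2 (trapezoid_le_one hη)) (Finset.mem_univ i)
  rw [Finset.sum_sub_distrib, Finset.sum_const, Finset.card_univ, nsmul_one] at hdefect
  exact max_eq_right (by linarith)

theorem boxBump_mem_twoHiddenLayerReLUNets [DecidableEq ι] (a b : ι → ℝ) (η : ℝ) :
    boxBump a b η ∈ twoHiddenLayerReLUNets (EuclideanSpace ℝ ι) := by
  have hrepr : boxBump a b η = fun x => max (∑ j : ι × Fin 4,
      ![η⁻¹, -η⁻¹, -η⁻¹, η⁻¹] j.2 * max (inner ℝ (EuclideanSpace.single j.1 (1 : ℝ)) x +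
        ![-a j.1, -(a j.1 + η), -(b j.1 - η), -b j.1] j.2) 0 + (1 - Fintype.card ι)) 0 := by
    ext x
    simp only [boxBump, trapezoid, Fintype.sum_prod_type, Fin.sum_univ_four, Fin.isValue,
      Matrix.cons_val_zero, Matrix.cons_val_one, Matrix.cons_val, EuclideanSpace.inner_single_left,
      Real.ringHom_apply, one_mul, neg_mul]
    rw [sub_eq_add_neg, neg_sub]
    congr 2
    refine Finset.sum_congr rfl fun i _ => ?_
    ring_nf
  rw [hrepr]
  exact relu_neuron_mem_twoHiddenLayerReLUNets _ _ _ _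

theorem hasCompactSupport_boxBump (hη : 0 < η) (hab : ∀ i, 2 * η ≤ b i - a i) :
    HasCompactSupport (boxBump a b η) :=
  HasCompactSupport.intro ((PiLp.homeomorph 2 _).isCompact_preimage.2
    (isCompact_univ_pi fun i => isCompact_Icc (a := a i) (b := b i))) fun _ =>
    boxBump_eq_zero hη hab

theorem norm_boxBump_sub_indicator_le (hη : 0 < η) (hab : ∀ i, 2 * η ≤ b i - a i)
    (x : EuclideanSpace ℝ ι) :
    ‖boxBump a b η x - (halfOpenBox a b).indicator 1 x‖ ≤
      (closedBox a b \ closedBox (fun i => a i + η) (fun i => b i - η)).indicator 1 x := by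
  by_cases hinner : x ∈ closedBox (fun i => a i + η) (fun i => b i - η)
  · have hbox : x ∈ halfOpenBox a b := fun i _ =>
      ⟨by linarith [(hinner i trivial).1], by linarith [(hinner i trivial).2]⟩
    rw [indicator_of_mem hbox, indicator_of_notMem fun h => h.2 hinner, boxBump_eq_one hη hinner]
    simp
  by_cases houter : x ∈ closedBox a b
  · have h₀ : 0 ≤ boxBump a b η x := boxBump_nonneg
    have h₁ : boxBump a b η x ≤ 1 := boxBump_le_one hη
    rw [indicator_of_mem (show x ∈ _ \ _ from ⟨houter, hinner⟩), Pi.one_apply, Real.norm_eq_abs,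
      abs_le]
    by_cases hbox : x ∈ halfOpenBox a b
    · rw [indicator_of_mem hbox, Pi.one_apply]; constructor <;> linarith
    · rw [indicator_of_notMem hbox]; constructor <;> linarith
  · have hbox : x ∉ halfOpenBox a b := fun h =>
      houter fun i _ => Ico_subset_Icc_self (h i trivial)
    rw [indicator_of_notMem hbox, boxBump_eq_zero hη hab houter, sub_zero, norm_zero]
    exact indicator_nonneg (fun _ _ => zero_le_one) x

end Bump

section BoxApproximation

variable {ι : Type*} [Fintype ι] {q : ℝ≥0∞}

theorem tendsto_eLpNorm_boxBump_sub_indicator {a b : ι → ℝ} (hab : ∀ i, a i < b i)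
    (hq0 : q ≠ 0) (hq : q ≠ ⊤) :
    Tendsto (fun η => eLpNorm (boxBump a b η - (halfOpenBox a b).indicator 1) q volume)
      (𝓝[>] 0) (𝓝 0) := by
  have hsmall : ∀ᶠ η in 𝓝[>] (0 : ℝ), 0 < η ∧ ∀ i, 2 * η ≤ b i - a i := by
    filter_upwards [self_mem_nhdsWithin, nhdsWithin_le_nhds (eventually_all.2 fun i =>
      Iio_mem_nhds (half_pos (sub_pos.2 (hab i))))] with η hη hηab
    exact ⟨hη, fun i => by linarith [hηab i]⟩
  have hvol : Tendsto (fun η : ℝ => ENNReal.ofReal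
      (∏ i, (b i - a i) - ∏ i, (b i - a i - 2 * η)) ^ (1 / q.toReal)) (𝓝[>] 0) (𝓝 0) := by
    have hcont : Continuous fun η : ℝ => ENNReal.ofReal
        (∏ i, (b i - a i) - ∏ i, (b i - a i - 2 * η)) ^ (1 / q.toReal) :=
      (ENNReal.continuous_rpow_const).comp (ENNReal.continuous_ofReal.comp (by fun_prop))
    have hpos : 0 < q.toReal⁻¹ := inv_pos.2 (ENNReal.toReal_pos hq0 hq)
    simpa [ENNReal.zero_rpow_of_pos hpos] using (hcont.tendsto 0).mono_left nhdsWithin_le_nhds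
  refine tendsto_of_tendsto_of_tendsto_of_le_of_le' tendsto_const_nhds hvol
    (Eventually.of_forall fun _ => bot_le) (hsmall.mono fun η ⟨hη, hηab⟩ => ?_)
  calc _ ≤ eLpNorm ((closedBox a b \ closedBox (fun i => a i + η) (fun i => b i - η)).indicator
          fun _ => 1) q volume :=
        eLpNorm_mono_real (norm_boxBump_sub_indicator_le hη hηab)
    _ = _ := by
      rw [eLpNorm_indicator_const
          ((measurableSet_closedBox _ _).diff (measurableSet_closedBox _ _)) hq0 hq,
        volume_closedBox_sdiff hη.le hηab, enorm_one, one_mul]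

theorem tendsto_eLpNorm_sum_smul_boxBump_sub {κ : Type*} (M : Finset κ) {a b : κ → ι → ℝ}
    (hab : ∀ m ∈ M, ∀ i, a m i < b m i) (γ : κ → ℝ) (hq1 : 1 ≤ q) (hq : q ≠ ⊤) :
    Tendsto (fun η => eLpNorm (∑ m ∈ M, γ m • boxBump (a m) (b m) η -
        ∑ m ∈ M, γ m • (halfOpenBox (a m) (b m)).indicator 1) q volume) (𝓝[>] 0) (𝓝 0) := by
  have hq0 : q ≠ 0 := (zero_lt_one.trans_le hq1).ne'
  have hlim : Tendsto (fun η => ∑ m ∈ M, ‖γ m‖ₑ * eLpNorm (boxBump (a m) (b m) η -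
      (halfOpenBox (a m) (b m)).indicator 1) q volume) (𝓝[>] 0) (𝓝 0) := by
    simpa using tendsto_finsetSum M fun m hm => ENNReal.Tendsto.const_mul
      (tendsto_eLpNorm_boxBump_sub_indicator (hab m hm) hq0 hq) (Or.inr enorm_ne_top)
  refine tendsto_of_tendsto_of_tendsto_of_le_of_le tendsto_const_nhds hlim (fun _ => bot_le)
    fun η => ?_
  calc _ = eLpNorm (∑ m ∈ M, γ m • (boxBump (a m) (b m) η -
        (halfOpenBox (a m) (b m)).indicator 1)) q volume := by
        simp only [smul_sub, Finset.sum_sub_distrib]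
    _ ≤ _ := eLpNorm_sum_le (fun m _ => ((continuous_boxBump _ _ _).aestronglyMeasurable.sub
        (measurable_const.indicator
          (measurableSet_halfOpenBox _ _)).aestronglyMeasurable).const_smul _) hq1
    _ = _ := by simp only [eLpNorm_const_smul]

end BoxApproximation

noncomputable section Grid

variable {ι : Type*} {ℓ : ℝ}

def gridIndex (ℓ : ℝ) (x : EuclideanSpace ℝ ι) : ι → ℤ := fun i => ⌊x i / ℓ⌋

def gridCorner (ℓ : ℝ) (m : ι → ℤ) : EuclideanSpace ℝ ι := WithLp.toLp 2 fun i => ℓ * m i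

def gridSample (ℓ : ℝ) (g : EuclideanSpace ℝ ι → ℝ) (x : EuclideanSpace ℝ ι) : ℝ :=
  g (gridCorner ℓ (gridIndex ℓ x))

theorem gridIndex_eq_iff (hℓ : 0 < ℓ) {x : EuclideanSpace ℝ ι} {m : ι → ℤ} :
    gridIndex ℓ x = m ↔ x ∈ halfOpenBox (fun i => ℓ * m i) (fun i => ℓ * m i + ℓ) := by
  simp only [gridIndex, halfOpenBox, funext_iff, Int.floor_eq_iff, le_div_iff₀ hℓ, div_lt_iff₀ hℓ,
    mem_preimage, mem_univ_pi, mem_Ico]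
  exact forall_congr' fun i => by constructor <;> rintro ⟨h₁, h₂⟩ <;> constructor <;> linarith

theorem eventually_dist_gridCorner_gridIndex_lt [Fintype ι] {r : ℝ} (hr : 0 < r) :
    ∀ᶠ ℓ in 𝓝[>] 0, ∀ x : EuclideanSpace ℝ ι, dist (gridCorner ℓ (gridIndex ℓ x)) x < r := by
  set K : ℝ≥0 := (Fintype.card ι : ℝ≥0) ^ (1 / (2 : ℝ≥0∞)).toReal
  have hK : Tendsto (fun ℓ : ℝ => (K : ℝ) * ℓ) (𝓝 0) (𝓝 0) := by
    simpa using (continuous_const_mul (K : ℝ)).tendsto 0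
  filter_upwards [self_mem_nhdsWithin, nhdsWithin_le_nhds (hK.eventually (gt_mem_nhds hr))]
    with ℓ (hℓ : 0 < ℓ) hKℓ x
  refine lt_of_le_of_lt ?_ hKℓ
  calc dist (gridCorner ℓ (gridIndex ℓ x)) x
      = dist (WithLp.toLp 2 fun i => ℓ * (gridIndex ℓ x i : ℝ)) (WithLp.toLp 2 (WithLp.ofLp x)) :=
        rfl
    _ ≤ K * dist (fun i => ℓ * (gridIndex ℓ x i : ℝ)) (WithLp.ofLp x) :=
        (PiLp.lipschitzWith_toLp 2 _).dist_le_mul _ _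
    _ ≤ K * ℓ := by
        gcongr
        refine dist_pi_le_iff hℓ.le |>.2 fun i => ?_
        obtain ⟨h₁, h₂⟩ := (gridIndex_eq_iff hℓ).1 rfl i (mem_univ i)
        rw [Real.dist_eq, abs_le]
        constructor <;> linarith

theorem finite_setOf_gridCorner_mem [Fintype ι] (hℓ : 0 < ℓ) {K : Set (EuclideanSpace ℝ ι)}
    (hK : Bornology.IsBounded K) : {m | gridCorner ℓ m ∈ K}.Finite := by
  classical
  obtain ⟨R, hR⟩ := hK.subset_closedBall 0
  refine (Set.finite_Icc (fun _ => -⌈R / ℓ⌉) (fun _ => ⌈R / ℓ⌉)).subset fun m hm => ?_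
  have hcoord : ∀ i, |(m i : ℝ)| ≤ R / ℓ := fun i => by
    have h := (PiLp.norm_apply_le (gridCorner ℓ m) i).trans (mem_closedBall_zero_iff.1 (hR hm))
    rw [le_div_iff₀ hℓ, ← abs_of_pos hℓ, ← abs_mul, mul_comm]
    simpa [gridCorner] using h
  refine ⟨fun i => ?_, fun i => ?_⟩
  · have := (abs_le.1 (hcoord i)).1
    have := Int.le_ceil (R / ℓ)
    exact_mod_cast (by linarith : (-⌈R / ℓ⌉ : ℝ) ≤ m i)
  · exact_mod_cast (abs_le.1 (hcoord i)).2.trans (Int.le_ceil _)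

theorem gridSample_eq_sum (hℓ : 0 < ℓ) {g : EuclideanSpace ℝ ι → ℝ} {M : Finset (ι → ℤ)}
    (hM : ∀ m ∉ M, g (gridCorner ℓ m) = 0) :
    gridSample ℓ g = ∑ m ∈ M, g (gridCorner ℓ m) •
      (halfOpenBox (fun i => ℓ * m i) (fun i => ℓ * m i + ℓ)).indicator 1 := by
  ext x
  simp only [Finset.sum_apply, Pi.smul_apply, smul_eq_mul]
  rw [Finset.sum_eq_single (gridIndex ℓ x)]
  · rw [indicator_of_mem ((gridIndex_eq_iff hℓ).1 rfl), Pi.one_apply, mul_one, gridSample]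
  · exact fun m _ hm => by
      rw [indicator_of_notMem fun h => hm ((gridIndex_eq_iff hℓ).2 h).symm, mul_zero]
  · exact fun hx => by rw [hM _ hx, zero_mul]

theorem tendsto_eLpNorm_gridSample_sub [Fintype ι] {q : ℝ≥0∞} {g : EuclideanSpace ℝ ι → ℝ}
    (hg : Continuous g) (hgs : HasCompactSupport g) (hq : q ≠ ⊤) :
    Tendsto (fun ℓ => eLpNorm (gridSample ℓ g - g) q volume) (𝓝[>] 0) (𝓝 0) := by
  obtain ⟨R, -, hR⟩ := hgs.exists_pos_le_norm
  have hball : volume (Metric.closedBall (0 : EuclideanSpace ℝ ι) (R + 1)) ^ (1 / q.toReal) ≠ ⊤ :=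
    ENNReal.rpow_ne_top_of_nonneg (by positivity) measure_closedBall_lt_top.ne
  have hgu := hg.uniformContinuous_of_tendsto_cocompact hgs.is_zero_at_infty
  refine ENNReal.tendsto_nhds_zero.2 fun ε hε => ?_
  obtain ⟨ε', hε', hε'ε⟩ := ENNReal.exists_nnreal_pos_mul_lt hball hε.ne'
  obtain ⟨δ, hδ, hgδ⟩ := Metric.uniformContinuous_iff.1 hgu ε' hε'
  filter_upwards [eventually_dist_gridCorner_gridIndex_lt (ι := ι) (lt_min hδ one_pos)] with ℓ hℓ
  have hsupp_g : Function.support g ⊆ Metric.closedBall 0 (R + 1) := fun x hx => by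
    by_contra h
    exact hx (hR x (by rw [Metric.mem_closedBall, dist_zero_right] at h; linarith))
  have hsupp_s : Function.support (gridSample ℓ g) ⊆ Metric.closedBall 0 (R + 1) := fun x hx => by
    have hc : ‖gridCorner ℓ (gridIndex ℓ x)‖ < R := not_le.1 fun h => hx (hR _ h)
    have hxc : x ∈ Metric.closedBall (gridCorner ℓ (gridIndex ℓ x)) 1 := by
      rw [Metric.mem_closedBall, dist_comm]
      exact ((hℓ x).trans_le (min_le_right _ _)).le
    rw [Metric.mem_closedBall, dist_zero_right]
    linarith [norm_le_of_mem_closedBall hxc]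
  calc eLpNorm (gridSample ℓ g - g) q volume
      ≤ ENNReal.ofReal ε' * volume (Metric.closedBall (0 : EuclideanSpace ℝ ι) (R + 1)) ^
          (1 / q.toReal) :=
        eLpNorm_sub_le_of_dist_bdd volume hq measurableSet_closedBall ε'.coe_nonneg
          (fun x => (hgδ ((hℓ x).trans_le (min_le_left _ _))).le) hsupp_s hsupp_g
    _ ≤ ε := by rw [ENNReal.ofReal_coe_nnreal]; exact hε'ε.le

end Grid

theorem MeasureTheory.eLpNorm_sub_le_eLpNorm_sub_add_eLpNorm_sub {α E : Type*}
    [MeasurableSpace α] {μ : Measure α} [NormedAddCommGroup E] {f g h : α → E} {p : ℝ≥0∞}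
    (hf : AEStronglyMeasurable f μ) (hg : AEStronglyMeasurable g μ)
    (hh : AEStronglyMeasurable h μ) (hp : 1 ≤ p) :
    eLpNorm (f - h) p μ ≤ eLpNorm (f - g) p μ + eLpNorm (g - h) p μ := by
  simpa only [sub_add_sub_cancel] using eLpNorm_add_le (hf.sub hg) (hg.sub hh) hp

section Density

variable {ι : Type*} [Fintype ι] {q ε : ℝ≥0∞}

theorem HasCompactSupport.exists_mem_twoHiddenLayerReLUNets_eLpNorm_sub_lt
    {g : EuclideanSpace ℝ ι → ℝ} (hgs : HasCompactSupport g) (hg : Continuous g) (hq1 : 1 ≤ q)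
    (hq : q ≠ ⊤) (hε : ε ≠ 0) :
    ∃ f ∈ twoHiddenLayerReLUNets (EuclideanSpace ℝ ι), HasCompactSupport f ∧
      eLpNorm (f - g) q volume < ε := by
  classical
  have hε₂ : 0 < ε / 2 := ENNReal.half_pos hε
  obtain ⟨ℓ, hsample, hℓ : 0 < ℓ⟩ := (((tendsto_eLpNorm_gridSample_sub hg hgs hq).eventually
    (gt_mem_nhds hε₂)).and self_mem_nhdsWithin).exists
  set M := (finite_setOf_gridCorner_mem hℓ hgs.isCompact.isBounded).toFinset
  have hM : ∀ m ∉ M, g (gridCorner ℓ m) = 0 := fun m hm =>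
    image_eq_zero_of_notMem_tsupport (by simpa [M] using hm)
  rw [gridSample_eq_sum hℓ hM] at hsample
  have hsmall : ∀ᶠ η in 𝓝[>] (0 : ℝ), 0 < η ∧ 2 * η ≤ ℓ := by
    filter_upwards [self_mem_nhdsWithin, nhdsWithin_le_nhds (Iio_mem_nhds (half_pos hℓ))]
      with η hη hηℓ
    exact ⟨hη, by linarith [mem_Iio.1 hηℓ]⟩
  obtain ⟨η, hbump, hη, hηℓ⟩ := (((tendsto_eLpNorm_sum_smul_boxBump_sub M
    (a := fun m i => ℓ * m i) (b := fun m i => ℓ * m i + ℓ)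
    (fun _ _ _ => lt_add_of_pos_right _ hℓ) (fun m => g (gridCorner ℓ m)) hq1 hq).eventually
    (gt_mem_nhds hε₂)).and hsmall).exists
  refine ⟨∑ m ∈ M, g (gridCorner ℓ m) • boxBump (fun i => ℓ * m i) (fun i => ℓ * m i + ℓ) η,
    sum_mem fun m _ => Submodule.smul_mem _ _ (boxBump_mem_twoHiddenLayerReLUNets _ _ _),
    HasCompactSupport.finset_sum fun m _ =>
      (hasCompactSupport_boxBump hη fun i => by linarith).smul_left, ?_⟩
  calc _ ≤ _ := eLpNorm_sub_le_eLpNorm_sub_add_eLpNorm_sub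
        (Finset.aestronglyMeasurable_sum _ fun m _ =>
          (continuous_boxBump _ _ _).aestronglyMeasurable.const_smul _)
        (Finset.aestronglyMeasurable_sum _ fun m _ => (measurable_const.indicator
          (measurableSet_halfOpenBox _ _)).aestronglyMeasurable.const_smul _)
        hg.aestronglyMeasurable hq1
    _ < ε / 2 + ε / 2 := ENNReal.add_lt_add hbump hsample
    _ = ε := ENNReal.add_halves ε

theorem MeasureTheory.MemLp.exists_mem_twoHiddenLayerReLUNets_eLpNorm_sub_lt
    {v : EuclideanSpace ℝ ι → ℝ} (hv : MemLp v q volume) (hq1 : 1 ≤ q) (hq : q ≠ ⊤)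
    (hε : ε ≠ 0) :
    ∃ f ∈ twoHiddenLayerReLUNets (EuclideanSpace ℝ ι), HasCompactSupport f ∧
      eLpNorm (f - v) q volume < ε := by
  obtain ⟨g, hgs, hvg, hg, hgv⟩ :=
    hv.exists_hasCompactSupport_eLpNorm_sub_le hq (ENNReal.half_pos hε).ne'
  obtain ⟨f, hf, hfs, hfg⟩ :=
    hgs.exists_mem_twoHiddenLayerReLUNets_eLpNorm_sub_lt hg hq1 hq (ENNReal.half_pos hε).ne'
  refine ⟨f, hf, hfs, ?_⟩
  calc _ ≤ _ := eLpNorm_sub_le_eLpNorm_sub_add_eLpNorm_sub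
        (continuous_of_mem_twoHiddenLayerReLUNets hf).aestronglyMeasurable
        hg.aestronglyMeasurable hv.1 hq1
    _ < ε / 2 + ε / 2 := ENNReal.add_lt_add_of_lt_of_le (hgv.sub hv).eLpNorm_ne_top hfg
        (by rw [eLpNorm_sub_comm]; exact hvg)
    _ = ε := ENNReal.add_halves ε

end Density

/-- Two-hidden-layer ReLU networks are dense in Lᵖ(ℝⁿ) (1 ≤ p < ∞): for every
v ∈ Lᵖ(ℝⁿ) and δ > 0 there is a compactly supported two-hidden-layer ReLU network
f(x) = w₃ σ(W₂ σ(W₁ x + b₁) + b₂) with ‖f - v‖_{Lᵖ} < δ. -/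
theorem two_hidden_layer_dense_Lp
    (n : ℕ) (p : ℝ) (hp : 1 ≤ p)
    (v : EuclideanSpace ℝ (Fin n) → ℝ)
    (hv : MemLp v (ENNReal.ofReal p) (volume : Measure (EuclideanSpace ℝ (Fin n))))
    (δ : ℝ) (hδ : 0 < δ) :
    ∃ (h₁ h₂ : ℕ) (W₁ : Fin h₁ → EuclideanSpace ℝ (Fin n)) (b₁ : Fin h₁ → ℝ)
      (W₂ : Fin h₂ → Fin h₁ → ℝ) (b₂ : Fin h₂ → ℝ) (w₃ : Fin h₂ → ℝ)
      (f : EuclideanSpace ℝ (Fin n) → ℝ),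
      f = (fun x => ∑ k, w₃ k *
            max (∑ j, W₂ k j * max (inner ℝ (W₁ j) x + b₁ j : ℝ) 0 + b₂ k) 0) ∧
      HasCompactSupport f ∧
      eLpNorm (fun x => f x - v x) (ENNReal.ofReal p)
        (volume : Measure (EuclideanSpace ℝ (Fin n))) < ENNReal.ofReal δ := by
  obtain ⟨_, ⟨h₁, h₂, W₁, b₁, W₂, b₂, w₃, rfl⟩, hfs, hf⟩ :=
    hv.exists_mem_twoHiddenLayerReLUNets_eLpNorm_sub_lt (ENNReal.one_le_ofReal.2 hp)
      ENNReal.ofReal_ne_top (ENNReal.ofReal_pos.2 hδ).ne'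
  exact ⟨h₁, h₂, W₁, b₁, W₂, b₂, w₃, _, rfl, hfs, hf⟩
end

section
/- Let Ω, 𝒯, and v be as in the weak representation theorem (v piecewise affine on a convex polytope mesh of Ω). Then v lies in the Lᵖ(Ω)-closure of the set of two-hidden-layer ReLU networks, for every 1 ≤ p < ∞. That is, for every δ > 0 there is a two-hidden-layer ReLU network f with ‖f - v‖_{Lᵖ(Ω)} < δ. -/
/-!
The slack `S i x = ∑ j, max (-(⟪w j, x⟫ + b j)) 0` of a cell `τ i` is a one-hidden-layer ReLU
network that vanishes exactly on `τ i`. If every affine piece `A i` is bounded by `M` on `Ω`, then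
`max (max (A i x + M) 0 - k * S i x) 0 - max (M - k * S i x) 0`
is a two-hidden-layer network equal to `A i` on `τ i`, vanishing where `k * S i ≥ 2 * M`, and
bounded by `M` on `Ω`. The sum of these bumps over the cells equals `v` at every interior point of
a cell, except on the set where `0 < k * S i < 2 * M` for some `i`. Cell boundaries are null since
the cells are convex, and the exceptional set shrinks to a null set as `k → ∞`; as the error is
bounded by `(N + 1) * M`, its `Lᵖ` norm tends to `0`.
-/

open scoped RealInnerProductSpace ENNReal
open MeasureTheory Filter Topology

section ReLUNetworks

variable (E : Type*) [NormedAddCommGroup E] [InnerProductSpace ℝ E]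

def shallowReLUNets : Submodule ℝ (E → ℝ) where
  carrier := {g | ∃ (h : ℕ) (W : Fin h → E) (b : Fin h → ℝ) (u : Fin h → ℝ) (c : ℝ),
    g = fun x => ∑ j, u j * max (⟪W j, x⟫ + b j) 0 + c}
  zero_mem' := ⟨0, 0, 0, 0, 0, by simp; rfl⟩
  add_mem' := by
    rintro _ _ ⟨h, W, b, u, c, rfl⟩ ⟨h', W', b', u', c', rfl⟩
    refine ⟨h + h', Fin.append W W', Fin.append b b', Fin.append u u', c + c', ?_⟩
    ext x
    simp only [Fin.sum_univ_add, Fin.append_left, Fin.append_right, Pi.add_apply]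
    ring
  smul_mem' := by
    rintro r _ ⟨h, W, b, u, c, rfl⟩
    refine ⟨h, W, b, r • u, r * c, ?_⟩
    ext x
    simp only [Pi.smul_apply, smul_eq_mul, Finset.mul_sum, mul_add, mul_assoc]

def twoLayerReLUNets : Submodule ℝ (E → ℝ) where
  carrier := {f | ∃ (h₁ h₂ : ℕ) (W₁ : Fin h₁ → E) (b₁ : Fin h₁ → ℝ)
      (W₂ : Fin h₂ → Fin h₁ → ℝ) (b₂ : Fin h₂ → ℝ) (w₃ : Fin h₂ → ℝ),
    f = fun x => ∑ k, w₃ k *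
      max (∑ j, W₂ k j * max (⟪W₁ j, x⟫ + b₁ j) 0 + b₂ k) 0}
  zero_mem' := ⟨0, 0, 0, 0, 0, 0, 0, by simp; rfl⟩
  add_mem' := by
    rintro _ _ ⟨h₁, h₂, W₁, b₁, W₂, b₂, w₃, rfl⟩
      ⟨h₁', h₂', W₁', b₁', W₂', b₂', w₃', rfl⟩
    refine ⟨h₁ + h₁', h₂ + h₂', Fin.append W₁ W₁', Fin.append b₁ b₁',
      Fin.append (fun k => Fin.append (W₂ k) 0) (fun k => Fin.append 0 (W₂' k)),
      Fin.append b₂ b₂', Fin.append w₃ w₃', ?_⟩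
    ext x
    simp [Fin.sum_univ_add, Fin.append_left, Fin.append_right]
  smul_mem' := by
    rintro r _ ⟨h₁, h₂, W₁, b₁, W₂, b₂, w₃, rfl⟩
    refine ⟨h₁, h₂, W₁, b₁, W₂, b₂, r • w₃, ?_⟩
    ext x
    simp only [Pi.smul_apply, smul_eq_mul, Finset.mul_sum, mul_assoc]

variable {E}

theorem const_mem_shallowReLUNets (c : ℝ) : (fun _ => c) ∈ shallowReLUNets E :=
  ⟨0, 0, 0, 0, c, by simp⟩

theorem relu_inner_add_mem_shallowReLUNets (w : E) (b : ℝ) :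
    (fun x => max (⟪w, x⟫ + b) 0) ∈ shallowReLUNets E :=
  ⟨1, fun _ => w, fun _ => b, fun _ => 1, 0, by simp⟩

theorem relu_comp_mem_twoLayerReLUNets {g : E → ℝ} (hg : g ∈ shallowReLUNets E) :
    (fun x => max (g x) 0) ∈ twoLayerReLUNets E := by
  obtain ⟨h, W, b, u, c, rfl⟩ := hg
  exact ⟨h, 1, W, b, fun _ => u, fun _ => c, fun _ => 1, by simp⟩

end ReLUNetworks

section PolytopeSlack

variable {E : Type*} [NormedAddCommGroup E] [InnerProductSpace ℝ E] {m : ℕ}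
  (w : Fin m → E) (b : Fin m → ℝ)

def polytopeSlack (x : E) : ℝ := ∑ j, max (-(⟪w j, x⟫ + b j)) 0

theorem polytopeSlack_nonneg (x : E) : 0 ≤ polytopeSlack w b x :=
  Finset.sum_nonneg fun _ _ => le_max_right _ _

theorem polytopeSlack_eq_zero_iff {x : E} :
    polytopeSlack w b x = 0 ↔ ∀ j, ⟪w j, x⟫ + b j ≥ 0 := by
  simp only [polytopeSlack, Finset.sum_eq_zero_iff_of_nonneg (fun _ _ => le_max_right _ _),
    Finset.mem_univ, true_implies, max_eq_right_iff, neg_nonpos, ge_iff_le]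

theorem continuous_polytopeSlack : Continuous (polytopeSlack w b) := by
  unfold polytopeSlack
  fun_prop

theorem convex_setOf_inner_add_nonneg : Convex ℝ {x : E | ∀ j, ⟪w j, x⟫ + b j ≥ 0} := by
  simp only [Set.ofPred_forall]
  refine convex_iInter fun j => ?_
  have : {x : E | ⟪w j, x⟫ + b j ≥ 0} = {x | -b j ≤ innerₛₗ ℝ (w j) x} := by
    ext x
    simp only [Set.mem_ofPred_eq, innerₛₗ_apply_apply, ge_iff_le, neg_le_iff_add_nonneg,
      add_comm]
  exact this ▸ convex_halfSpace_ge (innerₛₗ ℝ (w j)).isLinear _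

theorem polytopeSlack_mem_shallowReLUNets : polytopeSlack w b ∈ shallowReLUNets E := by
  have : polytopeSlack w b = ∑ j, fun x => max (⟪-w j, x⟫ + -b j) 0 := by
    ext x
    simp only [polytopeSlack, Finset.sum_apply, inner_neg_left, neg_add]
  exact this ▸ Submodule.sum_mem _ fun j _ => relu_inner_add_mem_shallowReLUNets _ _

end PolytopeSlack

section ClipBump

def clipBump (M y t : ℝ) : ℝ := max (max (y + M) 0 - t) 0 - max (M - t) 0

variable {M y : ℝ}

theorem clipBump_zero (hy : |y| ≤ M) : clipBump M y 0 = y := by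
  have := abs_le.1 hy
  simp only [clipBump, sub_zero]
  rw [max_eq_left (le_max_right _ _), max_eq_left (by linarith), max_eq_left (by linarith)]
  ring

theorem clipBump_eq_zero {t : ℝ} (hy : |y| ≤ M) (ht : 2 * M ≤ t) : clipBump M y t = 0 := by
  have := abs_le.1 hy
  have : max (y + M) 0 ≤ 2 * M := max_le (by linarith) (by linarith)
  simp only [clipBump]
  rw [max_eq_right (by linarith), max_eq_right (by linarith), sub_zero]

theorem abs_clipBump_le (hy : |y| ≤ M) (t : ℝ) : |clipBump M y t| ≤ M := by
  have := abs_le.1 hy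
  have hle : max (y + M) 0 ≤ 2 * M := max_le (by linarith) (by linarith)
  calc |clipBump M y t| ≤ |max (y + M) 0 - t - (M - t)| := abs_max_sub_max_le_abs _ _ _
    _ ≤ M := abs_le.2 ⟨by linarith [le_max_right (y + M) 0], by linarith⟩

theorem clipBump_comp_mem_twoLayerReLUNets {E : Type*} [NormedAddCommGroup E]
    [InnerProductSpace ℝ E] (M : ℝ) (w : E) (b : ℝ) {s : E → ℝ}
    (hs : s ∈ shallowReLUNets E) :
    (fun x => clipBump M (⟪w, x⟫ + b) (s x)) ∈ twoLayerReLUNets E := by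
  convert sub_mem
    (relu_comp_mem_twoLayerReLUNets (sub_mem (relu_inner_add_mem_shallowReLUNets w (b + M)) hs))
    (relu_comp_mem_twoLayerReLUNets (sub_mem (const_mem_shallowReLUNets M) hs)) using 1
  ext x
  simp [clipBump, add_assoc]

variable {ι : Type*} [Fintype ι] {y : ι → ℝ}

theorem sum_clipBump_eq {t : ι → ℝ} {i : ι} (hy : ∀ j, |y j| ≤ M) (hti : t i = 0)
    (hfar : ∀ j ≠ i, 2 * M ≤ t j) : ∑ j, clipBump M (y j) (t j) = y i := by
  rw [Finset.sum_eq_single_of_mem i (Finset.mem_univ i)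
    fun j _ hji => clipBump_eq_zero (hy j) (hfar j hji), hti, clipBump_zero (hy i)]

theorem abs_sum_clipBump_sub_le {t : ι → ℝ} (hy : ∀ j, |y j| ≤ M) (i : ι) :
    |∑ j, clipBump M (y j) (t j) - y i| ≤ (Fintype.card ι + 1) * M :=
  calc |∑ j, clipBump M (y j) (t j) - y i| ≤ ∑ j, |clipBump M (y j) (t j)| + |y i| :=
        (abs_sub _ _).trans (add_le_add_left (Finset.abs_sum_le_sum_abs _ _) _)
    _ ≤ ∑ _j : ι, M + M :=
        add_le_add (Finset.sum_le_sum fun j _ => abs_clipBump_le (hy j) _) (hy i)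
    _ = (Fintype.card ι + 1) * M := by simp; ring

theorem abs_sum_clipBump_sub_le_indicator {X : Type*} {y s : ι → X → ℝ} {x : X} {i : ι}
    (hy : ∀ j, |y j x| ≤ M) (hsi : s i x = 0) (hs : ∀ j ≠ i, 0 < s j x) (k : ℝ) :
    |∑ j, clipBump M (y j x) (k * s j x) - y i x| ≤
      {z | ∃ j, 0 < s j z ∧ k * s j z < 2 * M}.indicator
        (fun _ => (Fintype.card ι + 1) * M) x := by
  by_cases hbad : ∃ j, 0 < s j x ∧ k * s j x < 2 * M
  · rw [Set.indicator_of_mem (s := {z | ∃ j, 0 < s j z ∧ k * s j z < 2 * M}) hbad]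
    exact abs_sum_clipBump_sub_le hy i
  · rw [Set.indicator_of_notMem (s := {z | ∃ j, 0 < s j z ∧ k * s j z < 2 * M}) hbad,
      sum_clipBump_eq hy (by simp [hsi]) fun j hji => not_lt.1 fun h => hbad ⟨j, hs j hji, h⟩,
      sub_self, abs_zero]

end ClipBump

section Measure

variable {α : Type*} [MeasurableSpace α] {μ : Measure α}

theorem tendsto_eLpNorm_of_ae_norm_le_indicator {ι F : Type*} [NormedAddCommGroup F]
    {l : Filter ι} {p : ℝ≥0∞} (hp0 : p ≠ 0) (hp : p ≠ ∞) {g : ι → α → F}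
    {B : ι → Set α} {C : ℝ}
    (hg : ∀ k, ∀ᵐ x ∂μ, ‖g k x‖ ≤ (B k).indicator (fun _ => C) x)
    (hB : Tendsto (fun k => μ (B k)) l (𝓝 0)) :
    Tendsto (fun k => eLpNorm (g k) p μ) l (𝓝 0) := by
  have hexp : 0 < 1 / p.toReal := one_div_pos.2 (ENNReal.toReal_pos hp0 hp)
  have hlim : Tendsto (fun k => ‖C‖ₑ * μ (B k) ^ (1 / p.toReal)) l (𝓝 0) := by
    have := ENNReal.Tendsto.const_mul
      ((ENNReal.continuous_rpow_const (y := 1 / p.toReal)).tendsto 0 |>.comp hB)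
      (Or.inr (enorm_ne_top (x := C)))
    rwa [ENNReal.zero_rpow_of_pos hexp, mul_zero] at this
  exact tendsto_of_tendsto_of_tendsto_of_le_of_le tendsto_const_nhds hlim (fun _ => zero_le)
    fun k => (eLpNorm_mono_ae_real (hg k)).trans (eLpNorm_indicator_const_le _ _)

variable [IsFiniteMeasure μ]

theorem tendsto_measure_setOf_pos_and_mul_lt {s : α → ℝ} (hs : Measurable s) (c : ℝ) :
    Tendsto (fun k : ℕ => μ {x | 0 < s x ∧ k * s x < c}) atTop (𝓝 0) := by
  have hanti : Antitone fun k : ℕ => {x | 0 < s x ∧ k * s x < c} :=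
    fun k k' hkk' x ⟨hpos, hlt⟩ => ⟨hpos, lt_of_le_of_lt (by gcongr) hlt⟩
  have hempty : ⋂ k : ℕ, {x | 0 < s x ∧ k * s x < c} = ∅ := by
    refine Set.eq_empty_of_forall_notMem fun x hx => ?_
    obtain ⟨k, hk⟩ := exists_nat_gt (c / s x)
    obtain ⟨hpos, hlt⟩ := Set.mem_iInter.1 hx k
    exact ((div_lt_iff₀ hpos).1 hk).not_gt hlt
  have := tendsto_measure_iInter_atTop (μ := μ)
    (s := fun k : ℕ => {x | 0 < s x ∧ k * s x < c})
    (fun k => ((measurableSet_lt measurable_const hs).inter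
      (measurableSet_lt (hs.const_mul _) measurable_const)).nullMeasurableSet)
    hanti ⟨0, measure_ne_top _ _⟩
  rwa [hempty, measure_empty] at this

theorem tendsto_measure_setOf_exists_pos_and_mul_lt {ι : Type*} [Fintype ι]
    {s : ι → α → ℝ} (hs : ∀ i, Measurable (s i)) (c : ℝ) :
    Tendsto (fun k : ℕ => μ {x | ∃ i, 0 < s i x ∧ k * s i x < c}) atTop (𝓝 0) := by
  have hsum :
      Tendsto (fun k : ℕ => ∑ i, μ {x | 0 < s i x ∧ k * s i x < c}) atTop (𝓝 0) := by
    simpa using tendsto_finsetSum Finset.univ fun i _ =>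
      tendsto_measure_setOf_pos_and_mul_lt (hs i) c
  refine tendsto_of_tendsto_of_tendsto_of_le_of_le tendsto_const_nhds hsum (fun _ => zero_le)
    fun k => ?_
  rw [Set.ofPred_exists]
  exact measure_iUnion_fintype_le μ _

end Measure

theorem ae_mem_interior_and_forall_ne_notMem_of_mem {E ι : Type*} [NormedAddCommGroup E]
    [NormedSpace ℝ E] [MeasurableSpace E] [BorelSpace E] [FiniteDimensional ℝ E]
    (μ : Measure E) [μ.IsAddHaarMeasure] [Countable ι] {τ : ι → Set E}
    (hconv : ∀ i, Convex ℝ (τ i))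
    (hdisj : ∀ i j, i ≠ j → interior (τ i) ∩ interior (τ j) = ∅) :
    ∀ᵐ x ∂μ, ∀ i, x ∈ τ i → x ∈ interior (τ i) ∧ ∀ j ≠ i, x ∉ τ j := by
  have hfront : ∀ᵐ x ∂μ, ∀ i, x ∉ frontier (τ i) := by
    rw [ae_all_iff]
    exact fun i => measure_eq_zero_iff_ae_notMem.1 ((hconv i).addHaar_frontier μ)
  filter_upwards [hfront] with x hx
  have hint : ∀ i, x ∈ τ i → x ∈ interior (τ i) := fun i hxi =>
    by_contra fun h => hx i ⟨subset_closure hxi, h⟩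
  exact fun i hxi => ⟨hint i hxi, fun j hji hxj =>
    (hdisj j i hji).subset ⟨hint j hxj, hint i hxi⟩⟩

theorem ae_restrict_norm_sum_clipBump_sub_le_indicator {E ι : Type*} [NormedAddCommGroup E]
    [NormedSpace ℝ E] [MeasurableSpace E] [BorelSpace E] [FiniteDimensional ℝ E]
    (μ : Measure E) [μ.IsAddHaarMeasure] [Fintype ι] {Ω : Set E} (hΩ : MeasurableSet Ω)
    {τ : ι → Set E} (hconv : ∀ i, Convex ℝ (τ i)) (hcover : Ω ⊆ ⋃ i, τ i)
    (hdisj : ∀ i j, i ≠ j → interior (τ i) ∩ interior (τ j) = ∅)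
    {S : ι → E → ℝ} (hS : ∀ i x, x ∈ τ i ↔ S i x = 0) (hS0 : ∀ i x, 0 ≤ S i x)
    {v : E → ℝ} {A : ι → E → ℝ} (hv : ∀ i, ∀ x ∈ interior (τ i), v x = A i x)
    {M : ℝ} (hA : ∀ i, ∀ x ∈ Ω, |A i x| ≤ M) (k : ℝ) :
    ∀ᵐ x ∂μ.restrict Ω, ‖∑ i, clipBump M (A i x) (k * S i x) - v x‖ ≤
      {z | ∃ i, 0 < S i z ∧ k * S i z < 2 * M}.indicator
        (fun _ => (Fintype.card ι + 1) * M) x := by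
  filter_upwards [ae_restrict_of_ae (ae_mem_interior_and_forall_ne_notMem_of_mem μ hconv hdisj),
    ae_restrict_mem hΩ] with x hx hxΩ
  obtain ⟨i, hxi⟩ := Set.mem_iUnion.1 (hcover hxΩ)
  obtain ⟨hint, hother⟩ := hx i hxi
  rw [Real.norm_eq_abs, hv i x hint]
  exact abs_sum_clipBump_sub_le_indicator (fun j => hA j x hxΩ) ((hS i x).1 hxi)
    (fun j hji => (hS0 j x).lt_of_ne' (mt (hS j x).2 (hother j hji))) k

theorem IsCompact.exists_forall_abs_le {ι X : Type*} [Fintype ι] [TopologicalSpace X]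
    {K : Set X} (hK : IsCompact K) {f : ι → X → ℝ} (hf : ∀ i, Continuous (f i)) :
    ∃ M, ∀ i, ∀ x ∈ K, |f i x| ≤ M := by
  obtain ⟨M, hM⟩ := hK.exists_bound_of_continuousOn
    (f := fun x i => f i x) (continuous_pi hf).continuousOn
  exact ⟨M, fun i x hx => (norm_le_pi_norm (fun i => f i x) i).trans (hM x hx)⟩

theorem weak_representation_Lp_closure_general
    (n N : ℕ)
    (Ω : Set (EuclideanSpace ℝ (Fin n))) (hΩc : IsCompact Ω)
    (τ : Fin N → Set (EuclideanSpace ℝ (Fin n)))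
    (hτpoly : ∀ i, ∃ (m : ℕ) (w : Fin m → EuclideanSpace ℝ (Fin n)) (b : Fin m → ℝ),
      (∀ j, w j ≠ 0) ∧ τ i = {x | ∀ j, ⟪w j, x⟫ + b j ≥ 0})
    (hcover : Ω = ⋃ i, τ i)
    (hdisj : ∀ i j, i ≠ j → interior (τ i) ∩ interior (τ j) = ∅)
    (v : EuclideanSpace ℝ (Fin n) → ℝ)
    (haff : ∀ i, ∃ (a : EuclideanSpace ℝ (Fin n)) (c : ℝ),
      ∀ x ∈ interior (τ i), v x = ⟪a, x⟫ + c)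
    (p : ℝ) (hp : 1 ≤ p)
    (δ : ℝ) (hδ : 0 < δ) :
    ∃ (h₁ h₂ : ℕ) (W₁ : Fin h₁ → EuclideanSpace ℝ (Fin n)) (b₁ : Fin h₁ → ℝ)
      (W₂ : Fin h₂ → Fin h₁ → ℝ) (b₂ : Fin h₂ → ℝ) (w₃ : Fin h₂ → ℝ)
      (f : EuclideanSpace ℝ (Fin n) → ℝ),
      f = (fun x => ∑ k, w₃ k *
            max (∑ j, W₂ k j * max (⟪W₁ j, x⟫ + b₁ j) 0 + b₂ k) 0) ∧
      eLpNorm (fun x => f x - v x) (ENNReal.ofReal p)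
        ((volume : Measure (EuclideanSpace ℝ (Fin n))).restrict Ω) < ENNReal.ofReal δ := by
  choose m w b _ hτ using hτpoly
  choose a c hv using haff
  set S := fun i => polytopeSlack (w i) (b i)
  have hS : ∀ i x, x ∈ τ i ↔ S i x = 0 := fun i x => by
    rw [hτ i, polytopeSlack_eq_zero_iff]; rfl
  obtain ⟨M, hM⟩ := hΩc.exists_forall_abs_le (f := fun i x => ⟪a i, x⟫ + c i) (by fun_prop)
  set f := fun (k : ℕ) x => ∑ i, clipBump M (⟪a i, x⟫ + c i) (k * S i x)
  have hfv (k : ℕ) := ae_restrict_norm_sum_clipBump_sub_le_indicator volume hΩc.measurableSet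
    (fun i => hτ i ▸ convex_setOf_inner_add_nonneg (w i) (b i)) hcover.subset hdisj hS
    (fun i => polytopeSlack_nonneg (w i) (b i)) hv hM k
  have : IsFiniteMeasure (volume.restrict Ω) := isFiniteMeasure_restrict.2 hΩc.measure_lt_top.ne
  have hp0 : ENNReal.ofReal p ≠ 0 := ENNReal.ofReal_ne_zero_iff.2 (by linarith)
  have hlim := tendsto_eLpNorm_of_ae_norm_le_indicator hp0 ENNReal.ofReal_ne_top hfv
    (tendsto_measure_setOf_exists_pos_and_mul_lt
      (fun i => (continuous_polytopeSlack (w i) (b i)).measurable) (2 * M))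
  obtain ⟨k, hk⟩ := (hlim.eventually_lt_const (ENNReal.ofReal_pos.2 hδ)).exists
  have hnet : f k ∈ twoLayerReLUNets _ := by
    have := Submodule.sum_mem (twoLayerReLUNets _) fun i (_ : i ∈ Finset.univ) =>
      clipBump_comp_mem_twoLayerReLUNets M (a i) (c i)
        (Submodule.smul_mem _ (k : ℝ) (polytopeSlack_mem_shallowReLUNets (w i) (b i)))
    rwa [Finset.sum_fn] at this
  obtain ⟨h₁, h₂, W₁, b₁, W₂, b₂, w₃, hf⟩ := hnet
  exact ⟨h₁, h₂, W₁, b₁, W₂, b₂, w₃, f k, hf, hk⟩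

/-- A piecewise affine function v on a convex polytope mesh of a compact
polytopal domain Ω lies in the Lᵖ(Ω)-closure of two-hidden-layer ReLU networks (1 ≤ p < ∞):
for every δ > 0 there is a two-hidden-layer ReLU network f with ‖f - v‖_{Lᵖ(Ω)} < δ. -/
theorem weak_representation_Lp_closure
    (n N : ℕ)
    (Ω : Set (EuclideanSpace ℝ (Fin n))) (hΩc : IsCompact Ω)
    (τ : Fin N → Set (EuclideanSpace ℝ (Fin n)))
    (hτc : ∀ i, IsCompact (τ i))
    (hτpoly : ∀ i, ∃ (m : ℕ) (w : Fin m → EuclideanSpace ℝ (Fin n)) (b : Fin m → ℝ),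
      (∀ j, w j ≠ 0) ∧ τ i = {x | ∀ j, ⟪w j, x⟫ + b j ≥ 0})
    (hτint : ∀ i, (interior (τ i)).Nonempty)
    (hcover : Ω = ⋃ i, τ i)
    (hdisj : ∀ i j, i ≠ j → interior (τ i) ∩ interior (τ j) = ∅)
    (v : EuclideanSpace ℝ (Fin n) → ℝ)
    (haff : ∀ i, ∃ (a : EuclideanSpace ℝ (Fin n)) (c : ℝ),
      ∀ x ∈ interior (τ i), v x = ⟪a, x⟫ + c)
    (R : ℝ) (hR : ∀ x ∈ Ω, |v x| ≤ R)
    (p : ℝ) (hp : 1 ≤ p)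
    (δ : ℝ) (hδ : 0 < δ) :
    ∃ (h₁ h₂ : ℕ) (W₁ : Fin h₁ → EuclideanSpace ℝ (Fin n)) (b₁ : Fin h₁ → ℝ)
      (W₂ : Fin h₂ → Fin h₁ → ℝ) (b₂ : Fin h₂ → ℝ) (w₃ : Fin h₂ → ℝ)
      (f : EuclideanSpace ℝ (Fin n) → ℝ),
      f = (fun x => ∑ k, w₃ k *
            max (∑ j, W₂ k j * max (⟪W₁ j, x⟫ + b₁ j) 0 + b₂ k) 0) ∧
      eLpNorm (fun x => f x - v x) (ENNReal.ofReal p)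
        ((volume : Measure (EuclideanSpace ℝ (Fin n))).restrict Ω) < ENNReal.ofReal δ :=
  weak_representation_Lp_closure_general n N Ω hΩc τ hτpoly hcover hdisj v haff p hp δ hδ
end
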